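/- The plain sampled value admits the closed form of an importance-weighted terminal utility: for every z ∈ Z and every h ∈ H with h ⊑ z, û_i(σ,h|z) = π^σ(h,z)·u_i(z)·q(h)/q(z). -/

import Mathlib

open Finset

variable {A : Type*} [Fintype A] [DecidableEq A]

/-- The set of legal actions at history `h`: those `a` with `h ++ [a] ∈ H`. -/
def legal (H : Finset (List A)) (h : List A) : Finset A :=
  Finset.univ.filter fun a => h ++ [a] ∈ H

/-- Product of `f (h', a)` over all prefix steps `h'·a ⊑ h` of the history `h`.
With `f = ξ` this is the sampling probability `q(h)`; note `pathProd f [] = 1`. -/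
def pathProd (f : List A → A → ℝ) (h : List A) : ℝ :=
  ∏ k : Fin h.length, f (h.take (k : ℕ)) (h.get k)

/-- `π^σ(h, z)`: product of `σ (h', a)` over all prefix steps `h'·a` with `h ⊏ h'·a ⊑ z`. -/
def sfxProd (σ : List A → A → ℝ) (h z : List A) : ℝ :=
  ∏ k : Fin z.length, if h.length ≤ (k : ℕ) then σ (z.take (k : ℕ)) (z.get k) else 1

/-- `π^σ_{-i}(h)`: product of `σ (h', a)` over all prefix steps `h'·a ⊑ h` with `τ h' ≠ i`. -/
def oppProd {N : Type*} [DecidableEq N] (σ : List A → A → ℝ) (τ : List A → N) (i : N)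
    (h : List A) : ℝ :=
  ∏ k : Fin h.length, if τ (h.take (k : ℕ)) ≠ i then σ (h.take (k : ℕ)) (h.get k) else 1

/-- The expected value `u_i^σ(h) = Σ_{z ∈ Z, h ⊑ z} π^σ(h,z)·u_i(z)`. -/
def expUtil (σ : List A → A → ℝ) (u : List A → ℝ) (Z : Finset (List A)) (h : List A) : ℝ :=
  ∑ z ∈ Z.filter (fun z => h <+: z), sfxProd σ h z * u z

/-- The plain sampled history value `û_i(σ, h | z)`:
`u_i(h)` if `h = z`, `Σ_{a ∈ A(h)} σ(h,a)·û_i(σ,h,a|z)` if `h ⊏ z`, and `0` otherwise,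
where `û_i(σ,h,a|z) = û_i(σ,h·a|z)/ξ(h,a)` if `h·a ⊑ z` and `0` otherwise. -/
noncomputable def uhat (ξ σ : List A → A → ℝ) (u : List A → ℝ) (H : Finset (List A))
    (z : List A) (h : List A) : ℝ :=
  if h = z then u z
  else if h <+: z then
    ∑ a ∈ legal H h, σ h a *
      (if hpa : h ++ [a] <+: z then uhat ξ σ u H z (h ++ [a]) / ξ h a else 0)
  else 0
termination_by z.length - h.length
decreasing_by
  have := hpa.length_le
  simp only [List.length_append, List.length_singleton] at this ⊢
  omega

/-- The plain sampled history-action value `û_i(σ, h, a | z)`. -/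
noncomputable def uhatA (ξ σ : List A → A → ℝ) (u : List A → ℝ) (H : Finset (List A))
    (z : List A) (h : List A) (a : A) : ℝ :=
  if h ++ [a] <+: z then uhat ξ σ u H z (h ++ [a]) / ξ h a else 0

/-- The baseline-enhanced sampled history value `û_i^b(σ, h | z)`:
`u_i(h)` if `h = z`, `Σ_{a ∈ A(h)} σ(h,a)·û_i^b(σ,h,a|z)` if `h ⊏ z`, and `0` otherwise,
where `û_i^b(σ,h,a|z) = b(h,a) + (û_i^b(σ,h·a|z) − b(h,a))/ξ(h,a)` if `h·a ⊑ z`,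
`b(h,a)` if `h ⊏ z` and `h·a ⋢ z`, and `0` otherwise. -/
noncomputable def uhatB (ξ σ : List A → A → ℝ) (u : List A → ℝ) (H : Finset (List A))
    (b : List A → A → ℝ) (z : List A) (h : List A) : ℝ :=
  if h = z then u z
  else if h <+: z then
    ∑ a ∈ legal H h, σ h a *
      (if hpa : h ++ [a] <+: z then b h a + (uhatB ξ σ u H b z (h ++ [a]) - b h a) / ξ h a
       else b h a)
  else 0
termination_by z.length - h.length
decreasing_by
  have := hpa.length_le
  simp only [List.length_append, List.length_singleton] at this ⊢
  omega

/-- The baseline-enhanced sampled history-action value `û_i^b(σ, h, a | z)`. -/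
noncomputable def uhatBA (ξ σ : List A → A → ℝ) (u : List A → ℝ) (H : Finset (List A))
    (b : List A → A → ℝ) (z : List A) (h : List A) (a : A) : ℝ :=
  if h ++ [a] <+: z then b h a + (uhatB ξ σ u H b z (h ++ [a]) - b h a) / ξ h a
  else if h <+: z ∧ h ≠ z then b h a
  else 0

/-!
Unfold the recursion along the unique path from `h` to `z`. At each nonterminal prefix `h'` of `z`
only the action `a` with `h' ++ [a] ⊑ z` contributes, so one step multiplies the value by
`σ(h',a) / ξ(h',a)`. Telescoping these factors gives `π^σ(h,z) · q(h) / q(z)` in front of `u(z)`,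
the base case `û(σ,z|z) = u(z)` matching because `q(z) ≠ 0`.
-/

section Prefix

variable {α : Type*} {h z : List α} {a : α}

theorem List.length_lt_of_append_singleton_prefix (hp : h ++ [a] <+: z) :
    h.length < z.length := by
  simpa using hp.length_le

theorem List.take_length_of_append_singleton_prefix (hp : h ++ [a] <+: z) :
    z.take h.length = h :=
  (List.prefix_iff_eq_take.mp ((h.prefix_append [a]).trans hp)).symm

theorem List.getElem_length_of_append_singleton_prefix (hp : h ++ [a] <+: z) :
    z[h.length]'(List.length_lt_of_append_singleton_prefix hp) = a := by
  rw [← hp.getElem (by simp)]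
  simp

theorem List.take_append_getElem_prefix {k : ℕ} (hk : k < z.length) :
    z.take k ++ [z[k]] <+: z := by
  rw [List.take_append_getElem]
  exact z.take_prefix _

end Prefix

section Products

variable {α : Type*}

theorem pathProd_append_singleton (f : List α → α → ℝ) (h : List α) (a : α) :
    pathProd f (h ++ [a]) = pathProd f h * f h a := by
  rw [pathProd, ← Fin.prod_congr' _ (by simp : h.length + 1 = (h ++ [a]).length),
    Fin.prod_univ_castSucc]
  congr 1
  · refine Finset.prod_congr rfl fun k _ => ?_
    simp [List.take_append_of_le_length k.isLt.le, List.getElem_append_left k.isLt]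
  · simp

theorem pathProd_ne_zero {f : List α → α → ℝ} {z : List α}
    (hf : ∀ h a, h ++ [a] <+: z → f h a ≠ 0) : pathProd f z ≠ 0 :=
  Finset.prod_ne_zero_iff.mpr fun k _ => hf _ _ (List.take_append_getElem_prefix k.isLt)

theorem sfxProd_self (σ : List α → α → ℝ) (z : List α) : sfxProd σ z z = 1 :=
  Finset.prod_eq_one fun k _ => if_neg (not_le.mpr k.isLt)

theorem sfxProd_eq_mul_sfxProd_append (σ : List α → α → ℝ) {h z : List α} {a : α}
    (hp : h ++ [a] <+: z) : sfxProd σ h z = σ h a * sfxProd σ (h ++ [a]) z := by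
  have hl := List.length_lt_of_append_singleton_prefix hp
  have hsplit : ∀ k : Fin z.length,
      (if h.length ≤ (k : ℕ) then σ (z.take k) (z.get k) else 1) =
        (if k = ⟨h.length, hl⟩ then σ (z.take k) (z.get k) else 1) *
        (if (h ++ [a]).length ≤ (k : ℕ) then σ (z.take k) (z.get k) else 1) := by
    intro k
    rw [List.length_append, List.length_singleton]
    rcases lt_trichotomy (k : ℕ) h.length with hk | hk | hk
    · simp [hk.not_ge, Fin.ext_iff, hk.ne, Nat.lt_asymm hk]
    · simp [Fin.ext_iff, hk]
    · simp [hk.le, Fin.ext_iff, hk.ne', Nat.succ_le_of_lt hk]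
  rw [sfxProd, Fintype.prod_congr _ _ hsplit, Finset.prod_mul_distrib, Fintype.prod_ite_eq']
  simp [List.take_length_of_append_singleton_prefix hp,
    List.getElem_length_of_append_singleton_prefix hp, sfxProd]

end Products

section SampledValue

variable (ξ σ : List A → A → ℝ) (u : List A → ℝ) (H : Finset (List A))

theorem uhat_self (z : List A) : uhat ξ σ u H z z = u z := by
  rw [uhat, if_pos rfl]

theorem uhat_eq_of_append_singleton_prefix {h z : List A} {a : A} (hp : h ++ [a] <+: z)
    (ha : h ++ [a] ∈ H) : uhat ξ σ u H z h = σ h a * uhat ξ σ u H z (h ++ [a]) / ξ h a := by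
  have hne : h ≠ z := fun e =>
    (List.length_lt_of_append_singleton_prefix hp).ne (congrArg List.length e)
  rw [uhat, if_neg hne, if_pos ((h.prefix_append [a]).trans hp),
    Finset.sum_eq_single_of_mem a (by simpa [legal] using ha), dif_pos hp, mul_div_assoc]
  intro b _ hba
  rw [dif_neg fun hpb => hba ?_, mul_zero]
  rw [← List.getElem_length_of_append_singleton_prefix hp,
    ← List.getElem_length_of_append_singleton_prefix hpb]

theorem uhat_eq_of_prefix {z : List A} (hH : ∀ h a, h ++ [a] <+: z → h ++ [a] ∈ H)
    (hξ : ∀ h a, h ++ [a] <+: z → ξ h a ≠ 0) {h : List A} (hp : h <+: z) :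
    uhat ξ σ u H z h = sfxProd σ h z * u z * pathProd ξ h / pathProd ξ z := by
  obtain ⟨t, ht⟩ := hp
  induction t generalizing h with
  | nil =>
    rw [List.append_nil] at ht
    subst ht
    rw [uhat_self, sfxProd_self, one_mul, mul_div_cancel_right₀ _ (pathProd_ne_zero hξ)]
  | cons a t ih =>
    have hpa : h ++ [a] <+: z := ⟨t, by simpa using ht⟩
    rw [uhat_eq_of_append_singleton_prefix ξ σ u H hpa (hH h a hpa), ih (by simpa using ht),
      sfxProd_eq_mul_sfxProd_append σ hpa, pathProd_append_singleton]
    field_simp [hξ h a hpa]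

end SampledValue

theorem uhat_closed_form_general
    (H Z : Finset (List A))
    (hclosed : ∀ h ∈ H, ∀ h' : List A, h' <+: h → h' ∈ H)
    (hZH : Z ⊆ H)
    (hterm : ∀ z ∈ Z, ∀ h ∈ H, z <+: h → z = h)
    (ξ : List A → A → ℝ)
    (hξpos : ∀ h ∈ H, h ∉ Z → ∀ a ∈ legal H h, 0 < ξ h a)
    (σ : List A → A → ℝ)
    (u : List A → ℝ) :
    ∀ z ∈ Z, ∀ h ∈ H, h <+: z →
      uhat ξ σ u H z h = sfxProd σ h z * u z * pathProd ξ h / pathProd ξ z := by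
  intro z hz h _ hp
  have hzH := hZH hz
  refine uhat_eq_of_prefix ξ σ u H (fun h' a hpa => hclosed z hzH _ hpa) (fun h' a hpa => ?_) hp
  have hh' : h' <+: z := (h'.prefix_append [a]).trans hpa
  have hnZ : h' ∉ Z := fun hmem =>
    (List.length_lt_of_append_singleton_prefix hpa).ne
      (congrArg List.length (hterm h' hmem z hzH hh'))
  refine (hξpos h' (hclosed z hzH h' hh') hnZ a ?_).ne'
  simpa [legal] using hclosed z hzH _ hpa

/-- **Closed form of the plain sampled value.** For every `z ∈ Z` and `h ∈ H` with
`h ⊑ z`, the plain sampled value is the importance-weighted terminal utility: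
`û_i(σ,h|z) = π^σ(h,z)·u_i(z)·q(h)/q(z)`. -/
theorem uhat_closed_form
    (H Z : Finset (List A))
    (hempty : ([] : List A) ∈ H)
    (hclosed : ∀ h ∈ H, ∀ h' : List A, h' <+: h → h' ∈ H)
    (hZH : Z ⊆ H)
    (hreach : ∀ h ∈ H, ∃ z ∈ Z, h <+: z)
    (hterm : ∀ z ∈ Z, ∀ h ∈ H, z <+: h → z = h)
    (hlegal : ∀ h ∈ H, h ∉ Z → (legal H h).Nonempty)
    (ξ : List A → A → ℝ)
    (hξpos : ∀ h ∈ H, h ∉ Z → ∀ a ∈ legal H h, 0 < ξ h a)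
    (hξsum : ∀ h ∈ H, h ∉ Z → ∑ a ∈ legal H h, ξ h a = 1)
    (σ : List A → A → ℝ)
    (hσnn : ∀ h ∈ H, h ∉ Z → ∀ a ∈ legal H h, 0 ≤ σ h a)
    (hσsum : ∀ h ∈ H, h ∉ Z → ∑ a ∈ legal H h, σ h a = 1)
    (u : List A → ℝ) :
    ∀ z ∈ Z, ∀ h ∈ H, h <+: z →
      uhat ξ σ u H z h = sfxProd σ h z * u z * pathProd ξ h / pathProd ξ z :=
  uhat_closed_form_general H Z hclosed hZH hterm ξ hξpos σ u
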